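/- Defeasible Logic is coherent: for no defeasible theory D and literal p do both D ⊢ +Δp and D ⊢ -Δp hold, nor both D ⊢ +∂p and D ⊢ -∂p. -/

import Mathlib

/-! Core: propositional Defeasible Logic (proof theory via derivations) -/

/-- Literals: positive or negative atoms. -/
inductive Lit : Type
  | pos : ℕ → Lit
  | neg : ℕ → Lit
deriving DecidableEq, Repr

/-- The complement `~q` of a literal. -/
def Lit.compl : Lit → Lit
  | .pos n => .neg n
  | .neg n => .pos n

/-- The three kinds of rules in a defeasible theory. -/
inductive RuleKind : Type
  | strict | defeasible | defeater
deriving DecidableEq, Repr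

/-- A rule with a unique label (name), kind, antecedent and literal head. -/
structure DLRule : Type where
  name : ℕ
  kind : RuleKind
  ante : List Lit
  head : Lit
deriving DecidableEq, Repr

/-- A (finite, propositional) defeasible theory `D = (F, R, >)`. -/
structure DTheory : Type where
  facts : Finset Lit
  rules : Finset DLRule
  sup : DLRule → DLRule → Prop

/-- The four proof tags `+Δ`, `-Δ`, `+∂`, `-∂`. -/
inductive Tag : Type
  | pDelta | mDelta | pPartial | mPartial
deriving DecidableEq, Repr

/-- A tagged literal (a conclusion). -/
abbrev TaggedLit := Tag × Lit

/-- The inference conditions of Defeasible Logic: the tagged literal `c` may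
be appended to a derivation whose earlier lines are `prev`. -/
def ValidLine (D : DTheory) (prev : List TaggedLit) : TaggedLit → Prop
  | (Tag.pDelta, q) =>
      q ∈ D.facts ∨
      ∃ r ∈ D.rules, r.kind = RuleKind.strict ∧ r.head = q ∧
        ∀ a ∈ r.ante, (Tag.pDelta, a) ∈ prev
  | (Tag.mDelta, q) =>
      q ∉ D.facts ∧
      ∀ r ∈ D.rules, r.kind = RuleKind.strict → r.head = q →
        ∃ a ∈ r.ante, (Tag.mDelta, a) ∈ prev
  | (Tag.pPartial, q) =>
      (Tag.pDelta, q) ∈ prev ∨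
      ((∃ r ∈ D.rules, r.kind ≠ RuleKind.defeater ∧ r.head = q ∧
          ∀ a ∈ r.ante, (Tag.pPartial, a) ∈ prev) ∧
       (Tag.mDelta, q.compl) ∈ prev ∧
       ∀ s ∈ D.rules, s.head = q.compl →
         (∃ a ∈ s.ante, (Tag.mPartial, a) ∈ prev) ∨
         (∃ t ∈ D.rules, t.kind ≠ RuleKind.defeater ∧ t.head = q ∧
           (∀ a ∈ t.ante, (Tag.pPartial, a) ∈ prev) ∧ D.sup t s))
  | (Tag.mPartial, q) =>
      (Tag.mDelta, q) ∈ prev ∧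
      ((∀ r ∈ D.rules, r.kind ≠ RuleKind.defeater → r.head = q →
          ∃ a ∈ r.ante, (Tag.mPartial, a) ∈ prev) ∨
       (Tag.pDelta, q.compl) ∈ prev ∨
       (∃ s ∈ D.rules, s.head = q.compl ∧
          (∀ a ∈ s.ante, (Tag.pPartial, a) ∈ prev) ∧
          ∀ t ∈ D.rules, t.kind ≠ RuleKind.defeater → t.head = q →
            (∃ a ∈ t.ante, (Tag.mPartial, a) ∈ prev) ∨ ¬ D.sup t s))

/-- `P` is a derivation in `D`: a finite sequence of tagged literals each of
which satisfies the inference conditions w.r.t. the earlier lines. -/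
def IsDerivation (D : DTheory) (P : List TaggedLit) : Prop :=
  ∀ (i : ℕ) (h : i < P.length), ValidLine D (P.take i) (P.get ⟨i, h⟩)

/-- `D ⊢ (t, q)` : the tagged literal is a line of some derivation in `D`. -/
def Proves (D : DTheory) (t : Tag) (q : Lit) : Prop :=
  ∃ P : List TaggedLit, IsDerivation D P ∧ (t, q) ∈ P

/-- `D ⊢ +Δ q`. -/
abbrev PDelta (D : DTheory) (q : Lit) : Prop := Proves D Tag.pDelta q
/-- `D ⊢ -Δ q`. -/
abbrev MDelta (D : DTheory) (q : Lit) : Prop := Proves D Tag.mDelta q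
/-- `D ⊢ +∂ q`. -/
abbrev PPartial (D : DTheory) (q : Lit) : Prop := Proves D Tag.pPartial q
/-- `D ⊢ -∂ q`. -/
abbrev MPartial (D : DTheory) (q : Lit) : Prop := Proves D Tag.mPartial q

/-- `q` is strictly unknowable in `D`. -/
def StrictlyUnknowable (D : DTheory) (q : Lit) : Prop := ¬ PDelta D q ∧ ¬ MDelta D q

/-- `q` is defeasibly unknowable in `D`. -/
def DefeasiblyUnknowable (D : DTheory) (q : Lit) : Prop := ¬ PPartial D q ∧ ¬ MPartial D q

/-- `q` is unknowable in `D`. -/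
def Unknowable (D : DTheory) (q : Lit) : Prop :=
  StrictlyUnknowable D q ∨ DefeasiblyUnknowable D q

/-- The point `{q, ~q}` of the dependency graph corresponding to a literal `q`. -/
def Lit.pt (q : Lit) : Set Lit := {q, q.compl}

/-- Arc of the dependency graph `DG(D)` from point `{b,~b}` to point `{a,~a}`:
there is a strict or defeasible rule whose head is in `{b,~b}` and some antecedent
in `{a,~a}`.  (Stated on representative literals; it is complement-invariant.) -/
def DepArc (D : DTheory) (b a : Lit) : Prop :=
  ∃ r ∈ D.rules, r.kind ≠ RuleKind.defeater ∧
    (r.head = b ∨ r.head = b.compl) ∧ (a ∈ r.ante ∨ a.compl ∈ r.ante)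

/-- `D` is decisive iff its dependency graph is acyclic. -/
def Decisive (D : DTheory) : Prop := ∀ q : Lit, ¬ Relation.TransGen (DepArc D) q q

/-!
If `+Δq` is a line of one derivation and `-Δq` a line of another, the inference conditions
force the same clash `+Δa`, `-Δa` on some antecedent `a` among strictly earlier lines.
For `+∂q` against `-∂q` the earlier clash is either a `∂`-clash or a `Δ`-clash, possibly with
the two derivations swapped. Well-founded induction on the total length of the two derivations
therefore excludes every clash, the `Δ` case first and the `∂` case using it.
-/

namespace IsDerivation

variable {D : DTheory} {P : List TaggedLit}

theorem take (hP : IsDerivation D P) (n : ℕ) : IsDerivation D (P.take n) := by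
  intro i hi
  obtain ⟨hin, hiP⟩ := lt_min_iff.mp (List.length_take ▸ hi)
  simpa [List.take_take, Nat.min_eq_left hin.le] using hP i hiP

theorem exists_shorter_validLine (hP : IsDerivation D P) {c : TaggedLit} (hc : c ∈ P) :
    ∃ P', IsDerivation D P' ∧ P'.length < P.length ∧ ValidLine D P' c := by
  obtain ⟨⟨i, hi⟩, rfl⟩ := List.mem_iff_get.mp hc
  exact ⟨P.take i, hP.take i, by simp [hi], hP i hi⟩

end IsDerivation

namespace ValidLine

variable {D : DTheory} {P Q : List TaggedLit} {q : Lit}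

theorem exists_delta_clash (hp : ValidLine D P (Tag.pDelta, q))
    (hm : ValidLine D Q (Tag.mDelta, q)) :
    ∃ a, (Tag.pDelta, a) ∈ P ∧ (Tag.mDelta, a) ∈ Q := by
  obtain ⟨hnotfact, hstrict⟩ := hm
  rcases hp with hfact | ⟨r, hr, hrk, hrh, hante⟩
  · exact absurd hfact hnotfact
  · obtain ⟨a, ha, haQ⟩ := hstrict r hr hrk hrh
    exact ⟨a, hante a ha, haQ⟩

theorem exists_clash_of_partial (hp : ValidLine D P (Tag.pPartial, q))
    (hm : ValidLine D Q (Tag.mPartial, q)) :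
    (∃ a, (Tag.pDelta, a) ∈ P ∧ (Tag.mDelta, a) ∈ Q) ∨
    (∃ a, (Tag.pDelta, a) ∈ Q ∧ (Tag.mDelta, a) ∈ P) ∨
    (∃ a, (Tag.pPartial, a) ∈ P ∧ (Tag.mPartial, a) ∈ Q) ∨
    (∃ a, (Tag.pPartial, a) ∈ Q ∧ (Tag.mPartial, a) ∈ P) := by
  obtain ⟨hmDelta, hfails⟩ := hm
  rcases hp with hpDelta | ⟨⟨r, hr, hrk, hrh, hrante⟩, hmDeltaCompl, hattacks⟩
  · exact .inl ⟨q, hpDelta, hmDelta⟩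
  rcases hfails with hnoRule | hpDeltaCompl | ⟨s, hs, hsh, hsante, hnotBeaten⟩
  · obtain ⟨a, ha, haQ⟩ := hnoRule r hr hrk hrh
    exact .inr <| .inr <| .inl ⟨a, hrante a ha, haQ⟩
  · exact .inr <| .inl ⟨q.compl, hpDeltaCompl, hmDeltaCompl⟩
  rcases hattacks s hs hsh with ⟨a, ha, haP⟩ | ⟨t, ht, htk, hth, htante, hsup⟩
  · exact .inr <| .inr <| .inr ⟨a, hsante a ha, haP⟩
  rcases hnotBeaten t ht htk hth with ⟨a, ha, haQ⟩ | hnsup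
  · exact .inr <| .inr <| .inl ⟨a, htante a ha, haQ⟩
  · exact absurd hsup hnsup

end ValidLine

namespace IsDerivation

theorem delta_coherent {D : DTheory} {P Q : List TaggedLit} {q : Lit}
    (hP : IsDerivation D P) (hQ : IsDerivation D Q)
    (hp : (Tag.pDelta, q) ∈ P) (hm : (Tag.mDelta, q) ∈ Q) : False := by
  obtain ⟨P', hP', hPlt, hvp⟩ := hP.exists_shorter_validLine hp
  obtain ⟨Q', hQ', hQlt, hvq⟩ := hQ.exists_shorter_validLine hm
  obtain ⟨a, haP, haQ⟩ := hvp.exists_delta_clash hvq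
  exact delta_coherent hP' hQ' haP haQ
termination_by P.length + Q.length

theorem partial_coherent {D : DTheory} {P Q : List TaggedLit} {q : Lit}
    (hP : IsDerivation D P) (hQ : IsDerivation D Q)
    (hp : (Tag.pPartial, q) ∈ P) (hm : (Tag.mPartial, q) ∈ Q) : False := by
  obtain ⟨P', hP', hPlt, hvp⟩ := hP.exists_shorter_validLine hp
  obtain ⟨Q', hQ', hQlt, hvq⟩ := hQ.exists_shorter_validLine hm
  rcases hvp.exists_clash_of_partial hvq with
    ⟨a, haP, haQ⟩ | ⟨a, haQ, haP⟩ | ⟨a, haP, haQ⟩ | ⟨a, haQ, haP⟩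
  · exact hP'.delta_coherent hQ' haP haQ
  · exact hQ'.delta_coherent hP' haQ haP
  · exact partial_coherent hP' hQ' haP haQ
  · exact partial_coherent hQ' hP' haQ haP
termination_by P.length + Q.length

end IsDerivation

/-- coherence: for no defeasible theory `D` and literal `p`
do both `D ⊢ +Δp` and `D ⊢ -Δp` hold, nor both `D ⊢ +∂p` and `D ⊢ -∂p`. -/
theorem coherence (D : DTheory) (p : Lit) :
    ¬ (PDelta D p ∧ MDelta D p) ∧ ¬ (PPartial D p ∧ MPartial D p) :=
  ⟨fun ⟨⟨_, hP, hp⟩, ⟨_, hQ, hm⟩⟩ => hP.delta_coherent hQ hp hm,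
   fun ⟨⟨_, hP, hp⟩, ⟨_, hQ, hm⟩⟩ => hP.partial_coherent hQ hp hm⟩
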